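/- arXiv:2104.01877 — 5 statements merged into one kernel-verified Lean document; each statement's English description precedes it below -/
import Mathlib

section
/- Let a and b be coprime positive integers and n a positive integer. Let h = (h_1, …, h_{bn}) be the height sequence of an (a,b)-Dyck path of size n. Define H_m := h_{⌈m/a⌉} for 1 ≤ m ≤ abn, and for each 1 ≤ i ≤ b define the sequence 𝔥_i := (H_i, H_{i+b}, H_{i+2b}, …, H_{i+(an−1)b}). Then each 𝔥_i is the height sequence of a (1,1)-Dyck path of size an (i.e., 𝔥_i is weakly increasing and j ≤ 𝔥_i(j) ≤ an for all 1 ≤ j ≤ an), and for all 1 ≤ i ≤ b−1 and all j one has 𝔥_i(j) ≤ 𝔥_{i+1}(j); hence the horizontal strip-decomposition δ(P) = (q_1,…,q_b) satisfies q_i ≤ q_{i+1} in the Young order. -/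
private lemma le_mul_ceil' {a m : ℕ} (ha : 0 < a) : m ≤ (m + a - 1) / a * a := by
  have h1 := Nat.div_add_mod (m + a - 1) a
  have h2 := Nat.mod_lt (m + a - 1) ha
  rw [mul_comm a ((m + a - 1) / a)] at h1
  omega

private lemma ceil_div_mono' (a : ℕ) {m l : ℕ} (h : m ≤ l) :
    (m + a - 1) / a ≤ (l + a - 1) / a := Nat.div_le_div_right (by omega)

private lemma ceil_le' {a m t : ℕ} (ha : 0 < a) (hm : m ≤ a * t) :
    (m + a - 1) / a ≤ t := by
  have h1 : m + a - 1 ≤ a - 1 + t * a := by rw [mul_comm] at hm; omega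
  calc (m + a - 1) / a ≤ (a - 1 + t * a) / a := Nat.div_le_div_right h1
    _ = (a - 1) / a + t := Nat.add_mul_div_right _ _ ha
    _ = t := by rw [Nat.div_eq_of_lt (by omega), zero_add]

private lemma K_bounds' {a b n i j : ℕ} (ha : 0 < a) (hi : 1 ≤ i) (hib : i ≤ b)
    (hj1 : 1 ≤ j) (hj2 : j ≤ a * n) :
    1 ≤ (i + (j - 1) * b + a - 1) / a ∧ (i + (j - 1) * b + a - 1) / a ≤ b * n := by
  obtain ⟨j', rfl⟩ : ∃ j', j = j' + 1 := ⟨j - 1, by omega⟩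
  simp only [Nat.add_sub_cancel]
  constructor
  · rw [Nat.one_le_div_iff ha]; omega
  · apply ceil_le' ha
    calc i + j' * b ≤ b + j' * b := by omega
      _ = (j' + 1) * b := by ring
      _ ≤ a * n * b := Nat.mul_le_mul_right b hj2
      _ = a * (b * n) := by ring

private lemma K_low' {a b i j : ℕ} (ha : 0 < a) (hb : 0 < b) (hi : 1 ≤ i)
    (hj1 : 1 ≤ j) :
    j ≤ ((i + (j - 1) * b + a - 1) / a * a + b - 1) / b := by
  obtain ⟨j', rfl⟩ : ∃ j', j = j' + 1 := ⟨j - 1, by omega⟩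
  simp only [Nat.add_sub_cancel]
  rw [Nat.le_div_iff_mul_le hb]
  have hKa : i + j' * b ≤ (i + j' * b + a - 1) / a * a := le_mul_ceil' ha
  have hx : (j' + 1) * b = j' * b + b := by ring
  omega

/-!
STATEMENT 0: The horizontal strip-decomposition of an (a,b)-Dyck path.
The height sequence `h` of an (a,b)-Dyck path of size `n` is a weakly increasing
sequence `(h 1, …, h (b*n))` of positive integers with `⌈k*a/b⌉ ≤ h k ≤ a*n`.
With `H m := h ⌈m/a⌉` and `𝔥 i j := H (i + (j-1)*b)`, each `𝔥 i` is the height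
sequence of a (1,1)-Dyck path of size `a*n`, and `𝔥 i ≤ 𝔥 (i+1)` componentwise,
i.e. `q i ≤ q (i+1)` in the Young order.
Here `⌈x/y⌉` for naturals is `(x + y - 1) / y`.
-/
theorem horizontal_strip_decomposition
    (a b n : ℕ) (ha : 0 < a) (hb : 0 < b) (hn : 0 < n) (hab : Nat.Coprime a b)
    (h : ℕ → ℕ)
    (hmono : ∀ k l, 1 ≤ k → k ≤ l → l ≤ b * n → h k ≤ h l)
    (hlow : ∀ k, 1 ≤ k → k ≤ b * n → (k * a + b - 1) / b ≤ h k)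
    (hhigh : ∀ k, 1 ≤ k → k ≤ b * n → h k ≤ a * n) :
    (∀ i, 1 ≤ i → i ≤ b →
      (∀ j l, 1 ≤ j → j ≤ l → l ≤ a * n →
        h ((i + (j - 1) * b + a - 1) / a) ≤ h ((i + (l - 1) * b + a - 1) / a)) ∧
      (∀ j, 1 ≤ j → j ≤ a * n →
        j ≤ h ((i + (j - 1) * b + a - 1) / a) ∧
        h ((i + (j - 1) * b + a - 1) / a) ≤ a * n)) ∧
    (∀ i j, 1 ≤ i → i ≤ b - 1 → 1 ≤ j → j ≤ a * n →
      h ((i + (j - 1) * b + a - 1) / a) ≤ h ((i + 1 + (j - 1) * b + a - 1) / a)) := by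
  constructor
  · intro i hi1 hi2
    constructor
    · intro j l hj1 hjl hl
      apply hmono
      · exact (K_bounds' (n := n) ha hi1 hi2 hj1 (le_trans hjl hl)).1
      · exact ceil_div_mono' a
          (Nat.add_le_add_left (Nat.mul_le_mul_right b (by omega)) i)
      · exact (K_bounds' ha hi1 hi2 (le_trans hj1 hjl) hl).2
    · intro j hj1 hj2
      obtain ⟨hK1, hK2⟩ := K_bounds' ha hi1 hi2 hj1 hj2
      refine ⟨le_trans (K_low' ha hb hi1 hj1) (hlow _ hK1 hK2), hhigh _ hK1 hK2⟩
  · intro i j hi1 hi2 hj1 hj2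
    apply hmono
    · exact (K_bounds' (n := n) ha hi1 (by omega) hj1 hj2).1
    · exact ceil_div_mono' a (by omega)
    · exact (K_bounds' (i := i + 1) ha (by omega) (by omega) hj1 hj2).2
end

section
/- Let a and b be coprime positive integers and n a positive integer. Let u = (u_1, …, u_{an}) be the step sequence of an (a,b)-Dyck path of size n. Define U_m := u_{⌈m/b⌉} for 1 ≤ m ≤ abn, and for each 1 ≤ i ≤ a define the sequence ū_i := (U_{a·0+i}, U_{a·1+i}, …, U_{a(bn−1)+i}), i.e., ū_{i,j} := U_{a(j−1)+i} for 1 ≤ j ≤ bn. Then each ū_i is the step sequence of a (1,1)-Dyck path of size bn (i.e., ū_i is weakly increasing and ū_{i,j} ≤ j−1 for all j), and for all 1 ≤ i ≤ a−1 and all j one has ū_{i,j} ≤ ū_{i+1,j}; hence the vertical strip-decomposition θ(P) = (q_1,…,q_a) satisfies q_i ≥ q_{i+1} in the Young order. -/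
/-!
STATEMENT 1: The vertical strip-decomposition of an (a,b)-Dyck path.
The step sequence `u` of an (a,b)-Dyck path of size `n` is a weakly increasing
sequence `(u 1, …, u (a*n))` of nonnegative integers with `a * u k ≤ b * (k-1)`.
With `U m := u ⌈m/b⌉` and `ū i j := U (a*(j-1) + i)`, each `ū i` is the step
sequence of a (1,1)-Dyck path of size `b*n` (weakly increasing, `ū i j ≤ j - 1`),
and `ū i ≤ ū (i+1)` componentwise, i.e. `q i ≥ q (i+1)` in the Young order.
Here `⌈x/y⌉` for naturals is `(x + y - 1) / y`.
-/
theorem vertical_strip_decomposition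
    (a b n : ℕ) (ha : 0 < a) (hb : 0 < b) (hn : 0 < n) (hab : Nat.Coprime a b)
    (u : ℕ → ℕ)
    (hmono : ∀ k l, 1 ≤ k → k ≤ l → l ≤ a * n → u k ≤ u l)
    (hbound : ∀ k, 1 ≤ k → k ≤ a * n → a * u k ≤ b * (k - 1)) :
    (∀ i, 1 ≤ i → i ≤ a →
      (∀ j l, 1 ≤ j → j ≤ l → l ≤ b * n →
        u ((a * (j - 1) + i + b - 1) / b) ≤ u ((a * (l - 1) + i + b - 1) / b)) ∧
      (∀ j, 1 ≤ j → j ≤ b * n → u ((a * (j - 1) + i + b - 1) / b) ≤ j - 1)) ∧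
    (∀ i j, 1 ≤ i → i ≤ a - 1 → 1 ≤ j → j ≤ b * n →
      u ((a * (j - 1) + i + b - 1) / b) ≤ u ((a * (j - 1) + (i + 1) + b - 1) / b)) := by
  -- ceiling is at least 1 for m ≥ 1
  have hpos : ∀ m : ℕ, 1 ≤ m → 1 ≤ (m + b - 1) / b := by
    intro m hm
    rw [Nat.one_le_div_iff hb]
    omega
  -- ceiling is at most a*n when m ≤ b*(a*n)
  have hle : ∀ m : ℕ, m ≤ b * (a * n) → (m + b - 1) / b ≤ a * n := by
    intro m hm
    have h1 : (m + b - 1) / b < a * n + 1 := by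
      rw [Nat.div_lt_iff_lt_mul hb]
      have : (a * n + 1) * b = b * (a * n) + b := by ring
      omega
    omega
  -- b * (ceil - 1) ≤ m - 1
  have hceil : ∀ m : ℕ, 1 ≤ m → b * ((m + b - 1) / b - 1) ≤ m - 1 := by
    intro m hm
    have h1 := hpos m hm
    have h2 : ((m + b - 1) / b) * b ≤ m + b - 1 := Nat.div_mul_le_self _ _
    have h3 : b * ((m + b - 1) / b - 1) = ((m + b - 1) / b) * b - b := by
      rw [Nat.mul_sub, Nat.mul_comm, Nat.mul_one]
    omega
  -- m = a*(j-1)+i with 1 ≤ i ≤ a, 1 ≤ j ≤ b*n satisfies m ≤ b*(a*n)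
  have hmb : ∀ i j : ℕ, 1 ≤ i → i ≤ a → 1 ≤ j → j ≤ b * n →
      a * (j - 1) + i ≤ b * (a * n) := by
    intro i j hi1 hia hj hjn
    obtain ⟨j', rfl⟩ : ∃ j', j = j' + 1 := ⟨j - 1, by omega⟩
    simp only [Nat.add_sub_cancel]
    have h1 : a * j' + a = a * (j' + 1) := by ring
    have h2 : a * (j' + 1) ≤ a * (b * n) := Nat.mul_le_mul_left a hjn
    have h3 : a * (b * n) = b * (a * n) := by ring
    omega
  constructor
  · intro i hi1 hia
    constructor
    · intro j l hj hjl hl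
      apply hmono
      · exact hpos _ (by omega)
      · apply Nat.div_le_div_right
        have := Nat.mul_le_mul_left a (show j - 1 ≤ l - 1 by omega)
        omega
      · exact hle _ (hmb i l hi1 hia (by omega) hl)
    · intro j hj hjn
      obtain ⟨j', rfl⟩ : ∃ j', j = j' + 1 := ⟨j - 1, by omega⟩
      obtain ⟨i', rfl⟩ : ∃ i', i = i' + 1 := ⟨i - 1, by omega⟩
      simp only [Nat.add_sub_cancel]
      set m := a * j' + (i' + 1) with hm
      have hm1 : 1 ≤ m := by omega
      have hk1 : 1 ≤ (m + b - 1) / b := hpos m hm1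
      have hkn : (m + b - 1) / b ≤ a * n := by
        apply hle
        have := hmb (i' + 1) (j' + 1) (by omega) hia (by omega) hjn
        simpa using this
      have hb1 := hbound _ hk1 hkn
      have hc := hceil m hm1
      have key : a * u ((m + b - 1) / b) ≤ a * j' + i' := by omega
      by_contra h
      push_neg at h
      have h2 : a * (j' + 1) ≤ a * u ((m + b - 1) / b) :=
        Nat.mul_le_mul_left a (by omega)
      have h3 : a * (j' + 1) = a * j' + a := by ring
      omega
  · intro i j hi1 hia hj hjn
    apply hmono
    · exact hpos _ (by omega)
    · exact Nat.div_le_div_right (by omega)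
    · exact hle _ (hmb (i + 1) j (by omega) (by omega) hj hjn)
end

section
/- Let b, n be positive integers and let u = (u_1, …, u_n) be a weakly increasing sequence of nonnegative integers with u_i ≤ b(i−1) for all i. Then the sequence ζ(u), built by starting from the empty sequence and, for i = 1, …, n in order, inserting a contiguous block of b copies of i so that exactly u_i of the already-present entries lie to its left, is a b-Stirling permutation of size n. -/
/-!
`ζ(u)` is built by repeatedly inserting a contiguous block of a new largest value. Such an
insertion adds `b` copies of the new value and keeps everything else, so only the
pattern condition needs an argument: a subsequence `a c a` with `c < a` cannot appear.
If `a` is the new value, both of its occurrences, and hence `c`, lie in the contiguous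
block; otherwise `c < a` are both old values, and deleting the block shows that the
pattern was already there. Induction on `n` concludes.
-/

/-- `zeta b u N` : starting from the empty sequence, for `i = 1, …, N` in order,
insert a contiguous block of `b` copies of `i` so that exactly `u i` of the
already-present entries lie to its left. -/
def zeta (b : ℕ) (u : ℕ → ℕ) : ℕ → List ℕ
  | 0 => []
  | n + 1 =>
      (zeta b u n).take (u (n + 1)) ++ List.replicate b (n + 1) ++
        (zeta b u n).drop (u (n + 1))

/-- `π` is a `b`-Stirling permutation of size `N`: a sequence of length `b*N`
over `{1,…,N}` in which every value appears exactly `b` times, and whenever a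
value occurs between two occurrences of a value `i`, it is `≥ i`. -/
def IsStirling (b N : ℕ) (π : List ℕ) : Prop :=
  π.length = b * N ∧
  (∀ v, 1 ≤ v → v ≤ N → π.count v = b) ∧
  (∀ v, v ∈ π → 1 ≤ v ∧ v ≤ N) ∧
  ∀ p q r : Fin π.length, p < q → q < r → π.get p = π.get r → π.get p ≤ π.get q

open List

def Avoids212 (π : List ℕ) : Prop :=
  ∀ a c, [a, c, a] <+ π → a ≤ c

theorem forall_get_le_iff_avoids212 (π : List ℕ) :
    (∀ p q r : Fin π.length, p < q → q < r → π.get p = π.get r → π.get p ≤ π.get q) ↔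
      Avoids212 π := by
  unfold Avoids212
  constructor
  · intro h a c hsub
    obtain ⟨is, his, hinc⟩ := sublist_eq_map_getElem hsub
    rcases is with _ | ⟨p, _ | ⟨q, _ | ⟨r, _ | _⟩⟩⟩ <;> simp at his
    obtain ⟨rfl, rfl, hpr⟩ := his
    simp only [pairwise_cons, mem_cons, not_mem_nil] at hinc
    exact h p q r (hinc.1 q (by simp)) (hinc.2.1 r (by simp)) hpr
  · intro h p q r hpq hqr hpr
    simp only [get_eq_getElem] at hpr ⊢
    refine h _ _ ?_
    simpa [hpr] using map_getElem_sublist (is := [p, q, r]) (by simp [hpq, hqr, hpq.trans hqr])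

theorem List.cons_sublist_append_of_notMem {α : Type*} {a : α} {l l₁ l₂ : List α} (ha : a ∉ l₁)
    (h : a :: l <+ l₁ ++ l₂) : a :: l <+ l₂ := by
  induction l₁ with
  | nil => exact h
  | cons b l₁ ih =>
    rw [mem_cons, not_or] at ha
    exact ih ha.2 (h.of_cons_of_ne ha.1)

theorem List.eq_of_sublist_append_replicate_append {α : Type*} {a c : α} {k : ℕ} {x y : List α}
    (hx : a ∉ x) (hy : a ∉ y) (h : [a, c, a] <+ x ++ replicate k a ++ y) : c = a := by
  have hright : [a, c, a] <+ replicate k a ++ y :=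
    cons_sublist_append_of_notMem hx (by simpa using h)
  have hblock : [a, c, a] <+ replicate k a := by
    have := cons_sublist_append_of_notMem (l := [c, a]) (mem_reverse.not.2 hy)
      (by simpa using hright.reverse)
    simpa using this.reverse
  exact eq_of_mem_replicate (hblock.subset (by simp))

theorem Avoids212.append_replicate_append {x y : List ℕ} {m k : ℕ} (h : Avoids212 (x ++ y))
    (hlt : ∀ v ∈ x ++ y, v < m) : Avoids212 (x ++ replicate k m ++ y) := by
  intro a c hsub
  by_contra! hca
  have ha : a ∈ x ++ replicate k m ++ y := hsub.subset (by simp)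
  by_cases ham : a = m
  · subst ham
    have hx : a ∉ x := fun hax => (hlt a (mem_append_left y hax)).false
    have hy : a ∉ y := fun hay => (hlt a (mem_append_right x hay)).false
    exact hca.ne (List.eq_of_sublist_append_replicate_append hx hy hsub)
  · have ha' : a < m := hlt a (by simp_all)
    have hfilter : (x ++ replicate k m ++ y).filter (· < m) = x ++ y := by
      rw [filter_append, filter_append, filter_replicate_of_neg (by simp), append_nil,
        ← filter_append, filter_eq_self.2 (by simpa using hlt)]
    have hsub' := hsub.filter (· < m)
    rw [hfilter] at hsub'
    simp only [filter_cons, ha', hca.trans ha', decide_true, filter_nil] at hsub'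
    exact hca.not_ge (h a c hsub')

theorem IsStirling.insert_block {b N : ℕ} {π : List ℕ} (hπ : IsStirling b N π) (k : ℕ) :
    IsStirling b (N + 1) (π.take k ++ replicate b (N + 1) ++ π.drop k) := by
  obtain ⟨hlen, hcount, hmem, hpattern⟩ := hπ
  have hperm : π.take k ++ replicate b (N + 1) ++ π.drop k ~ replicate b (N + 1) ++ π := by
    simpa using perm_append_comm_assoc (π.take k) (replicate b (N + 1)) (π.drop k)
  have hlt : ∀ v ∈ π, v < N + 1 := fun v hv => Nat.lt_succ_of_le (hmem v hv).2
  refine ⟨?_, fun v hv1 hv2 => ?_, fun v hv => ?_, ?_⟩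
  · rw [hperm.length_eq, length_append, length_replicate, hlen]
    ring
  · rw [hperm.count_eq, count_append, count_replicate]
    rcases hv2.lt_or_eq with hv2 | rfl
    · simp [hv2.ne', hcount v hv1 (Nat.le_of_lt_succ hv2)]
    · simp [count_eq_zero.2 fun h => (hlt _ h).false]
  · rw [hperm.mem_iff, mem_append, mem_replicate] at hv
    rcases hv with ⟨-, rfl⟩ | hv
    · omega
    · exact ⟨(hmem v hv).1, (hmem v hv).2.trans N.le_succ⟩
  · rw [forall_get_le_iff_avoids212] at hpattern ⊢
    rw [← take_append_drop k π] at hpattern hlt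
    exact hpattern.append_replicate_append hlt

theorem zeta_isStirling_general (b n : ℕ) (u : ℕ → ℕ) : IsStirling b n (zeta b u n) := by
  induction n with
  | zero => exact ⟨rfl, fun v hv1 hv2 => by omega, by simp [zeta], fun p => p.elim0⟩
  | succ n ih => exact ih.insert_block (u (n + 1))

/-- if `u` is weakly increasing with `u i ≤ b*(i-1)`, then `ζ(u)`
is a `b`-Stirling permutation of size `n`. -/
theorem zeta_isStirling (b n : ℕ) (hb : 0 < b) (hn : 0 < n) (u : ℕ → ℕ)
    (hmono : ∀ i, 1 ≤ i → i < n → u i ≤ u (i + 1))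
    (hbound : ∀ i, 1 ≤ i → i ≤ n → u i ≤ b * (i - 1)) :
    IsStirling b n (zeta b u n) :=
  zeta_isStirling_general b n u
end

section
/- Let a, b be coprime positive integers and n a positive integer, and let P ∈ {N,E}^{(a+b)n} be the word of an (a,b)-Dyck path of size n. Let P̃ ∈ {N,E}^{2abn} be the (a,b)-enlarged path obtained from P by replacing every letter N by b consecutive N's and every letter E by a consecutive E's. For r ∈ {a, b} and 1 ≤ i ≤ r, let P̃^{(r)}_i be the subword of P̃ consisting of the letters in positions congruent to i modulo r (positions i, r+i, 2r+i, …). Then: (a) for each 1 ≤ i ≤ b, P̃^{(b)}_i is a (1,1)-Dyck word of size an whose height sequence is 𝔥_i, the i-th height sequence of the horizontal strip-decomposition δ(P); (b) for each 1 ≤ i ≤ a, P̃^{(a)}_i is a (1,1)-Dyck word of size bn whose step sequence is ū_i, the i-th step sequence of the vertical strip-decomposition θ(P). -/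
/-!
In the enlarged word the `m`-th `E` is preceded by `m - 1` letters `E` and by `b·h(⌈m/a⌉)` letters
`N`, so it sits at position `(m - 1) + b·h(⌈m/a⌉)`; dually the `m`-th `N` sits at
`(m - 1) + a·u(⌈m/b⌉)`. As the shift is a multiple of `b`, the `E`'s lying in the strip of
positions `≡ i (mod b)` are exactly those numbered `i, i + b, i + 2b, …`, and dividing their
positions by `b` shows that the `j`-th of them is preceded in the strip by `h(⌈(i + (j-1)b)/a⌉)`
letters `N`. The strip is a Dyck word because `a·k ≤ b·h(k)` along `P`. The vertical strips are
handled in the same way with the roles of the two letters exchanged, using `a·u(k) ≤ b·(k - 1)`.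
-/

/-- the (0-based) index of the `k`-th (1-based) `true` (north step `N`) in `w`. -/
def kthTrueIdx (w : List Bool) (k : ℕ) : ℕ :=
  ((List.range w.length).filter (fun p => w.getD p false = true)).getD (k - 1) 0

/-- the (0-based) index of the `k`-th (1-based) `false` (east step `E`) in `w`. -/
def kthFalseIdx (w : List Bool) (k : ℕ) : ℕ :=
  ((List.range w.length).filter (fun p => w.getD p true = false)).getD (k - 1) 0

/-- `stepVal w k` : number of `E`'s (`false`) preceding the `k`-th `N` (`true`),
the `k`-th entry of the step sequence of the word `w`. -/
def stepVal (w : List Bool) (k : ℕ) : ℕ :=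
  (w.take (kthTrueIdx w k)).count false

/-- `heightVal w k` : number of `N`'s (`true`) preceding the `k`-th `E`
(`false`), the `k`-th entry of the height sequence of the word `w`. -/
def heightVal (w : List Bool) (k : ℕ) : ℕ :=
  (w.take (kthFalseIdx w k)).count true

/-- the (a,b)-enlarged path: every `N` (`true`) is replaced by `b` consecutive
`N`'s and every `E` (`false`) by `a` consecutive `E`'s. -/
def enlarge (a b : ℕ) (w : List Bool) : List Bool :=
  w.flatMap (fun c => if c then List.replicate b true else List.replicate a false)

/-- `subword r i w` : the subword of `w` consisting of the letters in
(1-based) positions `i, r+i, 2r+i, …` (congruent to `i` modulo `r`). -/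
def subword (r i : ℕ) (w : List Bool) : List Bool :=
  ((List.range w.length).filter (fun p => p % r = i - 1)).map (fun p => w.getD p false)

def letterPositions (e : Bool) (w : List Bool) : List ℕ :=
  (List.range w.length).filter fun p => w.getD p (!e) = e

def countBefore (e : Bool) (w : List Bool) (k : ℕ) : ℕ :=
  (w.take ((letterPositions e w).getD (k - 1) 0)).count (!e)

theorem heightVal_eq_countBefore (w : List Bool) (k : ℕ) :
    heightVal w k = countBefore false w k := rfl

theorem stepVal_eq_countBefore (w : List Bool) (k : ℕ) :
    stepVal w k = countBefore true w k := rfl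

theorem letterPositions_append (e : Bool) (u v : List Bool) :
    letterPositions e (u ++ v) =
      letterPositions e u ++ (letterPositions e v).map (u.length + ·) := by
  simp only [letterPositions, List.length_append, List.range_add, List.filter_append,
    List.filter_map]
  congr 1
  · exact List.filter_congr fun p hp => by
      rw [List.getD_append _ _ _ _ (List.mem_range.mp hp)]
  · congr 1
    exact List.filter_congr fun p _ => by
      simp only [Function.comp_apply, List.getD_append_right _ _ _ _ (Nat.le_add_right _ _),
        Nat.add_sub_cancel_left]

theorem length_letterPositions (e : Bool) (w : List Bool) :
    (letterPositions e w).length = w.count e := by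
  induction w using List.reverseRecOn with
  | nil => rfl
  | append_singleton w x ih =>
    rw [letterPositions_append, List.length_append, List.length_map, ih, List.count_append]
    cases e <;> cases x <;> rfl

theorem letterPositions_append_cons_getD (e : Bool) (u v : List Bool) :
    (letterPositions e (u ++ e :: v)).getD (u.count e) 0 = u.length := by
  rw [letterPositions_append, List.getD_append_right _ _ _ _ (length_letterPositions e u).le,
    length_letterPositions, Nat.sub_self, ← List.singleton_append, letterPositions_append]
  cases e <;> simp [letterPositions]

theorem countBefore_append_cons (e : Bool) (u v : List Bool) :
    countBefore e (u ++ e :: v) (u.count e + 1) = u.count (!e) := by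
  rw [countBefore, Nat.add_sub_cancel, letterPositions_append_cons_getD, List.take_left' rfl]

theorem exists_eq_append_cons_of_lt_count {e : Bool} {w : List Bool} {k : ℕ}
    (hk : k < w.count e) : ∃ u v, w = u ++ e :: v ∧ u.count e = k := by
  induction w generalizing k with
  | nil => simp at hk
  | cons x w ih =>
    by_cases hx : x = e
    · subst hx
      cases k with
      | zero => exact ⟨[], w, rfl, rfl⟩
      | succ k =>
        obtain ⟨u, v, rfl, hu⟩ := ih (k := k) (by simpa using hk)
        exact ⟨x :: u, v, rfl, by simpa using hu⟩
    · obtain ⟨u, v, rfl, hu⟩ := ih (k := k) (by simpa [List.count_cons, hx] using hk)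
      exact ⟨x :: u, v, rfl, by simpa [List.count_cons, hx] using hu⟩

theorem letterPositions_eq_map_countBefore (e : Bool) (w : List Bool) :
    letterPositions e w =
      (List.range (w.count e)).map fun k => k + countBefore e w (k + 1) := by
  refine List.ext_getElem (by simp [length_letterPositions]) fun k hk _ => ?_
  obtain ⟨u, v, rfl, rfl⟩ :=
    exists_eq_append_cons_of_lt_count (length_letterPositions e w ▸ hk)
  rw [← List.getD_eq_getElem _ 0, letterPositions_append_cons_getD, List.getElem_map,
    List.getElem_range, countBefore_append_cons, List.count_add_count_not]

theorem count_eq_of_letterPositions_eq_map {e : Bool} {w : List Bool} {N : ℕ} {f : ℕ → ℕ}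
    (h : letterPositions e w = (List.range N).map fun k => k + f k) : w.count e = N := by
  simpa [length_letterPositions] using congrArg List.length h

theorem countBefore_eq_of_letterPositions_eq_map {e : Bool} {w : List Bool} {N : ℕ}
    {f : ℕ → ℕ} (h : letterPositions e w = (List.range N).map fun k => k + f k) {k : ℕ}
    (hk : k < N) : countBefore e w (k + 1) = f k := by
  have h' := letterPositions_eq_map_countBefore e w
  rw [h, count_eq_of_letterPositions_eq_map h] at h'
  simpa [hk] using congrArg (·[k]?) h'.symm

def stretch (ℓ : Bool → ℕ) (w : List Bool) : List Bool :=
  w.flatMap fun x => List.replicate (ℓ x) x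

theorem enlarge_eq_stretch (a b : ℕ) (w : List Bool) :
    enlarge a b w = stretch (fun x => if x then b else a) w := by
  unfold enlarge stretch
  congr 1
  funext x
  cases x <;> rfl

theorem count_stretch (ℓ : Bool → ℕ) (e : Bool) (w : List Bool) :
    (stretch ℓ w).count e = ℓ e * w.count e := by
  induction w with
  | nil => rfl
  | cons x w ih =>
    rw [stretch, List.flatMap_cons, ← stretch, List.count_append, ih, List.count_replicate,
      List.count_cons]
    cases x <;> cases e <;> simp [Nat.mul_succ, Nat.add_comm]

theorem length_stretch (ℓ : Bool → ℕ) (w : List Bool) :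
    (stretch ℓ w).length = ℓ false * w.count false + ℓ true * w.count true := by
  rw [← List.count_false_add_count_true, count_stretch, count_stretch]

theorem countBefore_stretch {ℓ : Bool → ℕ} {e : Bool} {w : List Bool} {m : ℕ}
    (hm : m < ℓ e * w.count e) :
    countBefore e (stretch ℓ w) (m + 1) = ℓ (!e) * countBefore e w (m / ℓ e + 1) := by
  have hℓ : 0 < ℓ e := Nat.pos_of_ne_zero fun h => by simp [h] at hm
  obtain ⟨u, v, rfl, hu⟩ := exists_eq_append_cons_of_lt_count
    ((Nat.div_lt_iff_lt_mul hℓ).2 (by rwa [mul_comm]) : m / ℓ e < w.count e)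
  have hrep : List.replicate (ℓ e) e =
      List.replicate (m % ℓ e) e ++ e :: List.replicate (ℓ e - m % ℓ e - 1) e := by
    rw [← List.replicate_succ, ← List.replicate_add]
    have := Nat.mod_lt m hℓ
    congr 1
    omega
  have hsplit : stretch ℓ (u ++ e :: v) = (stretch ℓ u ++ List.replicate (m % ℓ e) e) ++
      e :: (List.replicate (ℓ e - m % ℓ e - 1) e ++ stretch ℓ v) := by
    simp [stretch, hrep]
  have hcount : (stretch ℓ u ++ List.replicate (m % ℓ e) e).count e = m := by
    rw [List.count_append, count_stretch, hu, List.count_replicate_self, Nat.div_add_mod]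
  have key := countBefore_append_cons e (stretch ℓ u ++ List.replicate (m % ℓ e) e)
    (List.replicate (ℓ e - m % ℓ e - 1) e ++ stretch ℓ v)
  rw [hcount] at key
  rw [hsplit, key, ← hu, countBefore_append_cons, List.count_append, count_stretch]
  cases e <;> simp [List.count_replicate]

theorem letterPositions_stretch (ℓ : Bool → ℕ) (e : Bool) (w : List Bool) :
    letterPositions e (stretch ℓ w) = (List.range (ℓ e * w.count e)).map
      fun m => m + ℓ (!e) * countBefore e w (m / ℓ e + 1) := by
  rw [letterPositions_eq_map_countBefore, count_stretch]
  exact List.map_congr_left fun m hm => by rw [countBefore_stretch (List.mem_range.mp hm)]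

theorem range_mul_filter_mod_eq_map {r c : ℕ} (hc : c < r) (T : ℕ) :
    (List.range (r * T)).filter (fun p => p % r = c) =
      (List.range T).map fun j => c + j * r := by
  induction T with
  | zero => simp
  | succ T ih =>
    rw [Nat.mul_succ, List.range_add, List.filter_append, ih, List.filter_map, List.range_succ,
      List.map_append]
    have hc' : (List.range r).filter (fun p => decide ((r * T + p) % r = c)) = [c] := by
      rw [List.filter_congr (q := fun p => decide (p = c)) fun p hp => by
          simp [Nat.mod_eq_of_lt (List.mem_range.mp hp)],
        List.filter_eq, List.count_eq_one_of_mem List.nodup_range (List.mem_range.2 hc)]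
      rfl
    simp only [Function.comp_def, hc', List.map_cons, List.map_nil]
    congr 2
    ring

theorem subword_eq_map_range {r c T : ℕ} {w : List Bool} (hc : c < r)
    (hw : w.length = r * T) :
    subword r (c + 1) w = (List.range T).map fun j => w.getD (c + j * r) false := by
  rw [subword, hw, Nat.add_sub_cancel, range_mul_filter_mod_eq_map hc, List.map_map]
  rfl

theorem length_subword {r c T : ℕ} {w : List Bool} (hc : c < r) (hw : w.length = r * T) :
    (subword r (c + 1) w).length = T := by
  simp [subword_eq_map_range hc hw]

theorem letterPositions_subword (e : Bool) {r c T : ℕ} {w : List Bool} (hc : c < r)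
    (hw : w.length = r * T) :
    letterPositions e (subword r (c + 1) w) =
      ((letterPositions e w).filter fun p => p % r = c).map (· / r) := by
  have hlt : ∀ j < T, c + j * r < w.length := fun j hj => by rw [hw]; nlinarith
  rw [letterPositions, letterPositions, List.filter_comm, hw, range_mul_filter_mod_eq_map hc,
    List.filter_map, List.map_map, subword_eq_map_range hc hw, List.length_map,
    List.length_range]
  have hdiv : ∀ j, ((· / r) ∘ fun j => c + j * r) j = j := fun j => by
    simp only [Function.comp_apply]
    rw [Nat.add_mul_div_right _ _ (by omega), Nat.div_eq_of_lt hc, zero_add]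
  rw [List.map_congr_left fun j _ => hdiv j, List.map_id']
  refine List.filter_congr fun j hj => ?_
  have hj := List.mem_range.mp hj
  simp [List.getElem?_eq_getElem (hlt j hj), hj]

theorem letterPositions_subword_of_eq_map {e : Bool} {r c T N : ℕ} {w : List Bool}
    {g : ℕ → ℕ} (hc : c < r) (hw : w.length = r * T)
    (h : letterPositions e w = (List.range (r * N)).map fun m => m + r * g m) :
    letterPositions e (subword r (c + 1) w) =
      (List.range N).map fun j => j + g (c + j * r) := by
  rw [letterPositions_subword e hc hw, h, List.filter_map]
  have hmod : ((fun p => decide (p % r = c)) ∘ fun m => m + r * g m) =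
      fun m => decide (m % r = c) := by
    funext m
    simp [Nat.add_mul_mod_self_left]
  rw [hmod, range_mul_filter_mod_eq_map hc, List.map_map, List.map_map]
  refine List.map_congr_left fun j _ => ?_
  simp only [Function.comp]
  rw [show c + j * r + r * g (c + j * r) = c + r * (j + g (c + j * r)) by ring,
    Nat.add_mul_div_left _ _ (by omega), Nat.div_eq_of_lt hc, zero_add]

theorem count_take_false_le_of_le_heightVal {w : List Bool}
    (h : ∀ k, 1 ≤ k → k ≤ w.count false → k ≤ heightVal w k) (p : ℕ) :
    (w.take p).count false ≤ (w.take p).count true := by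
  -- the last `E` of a prefix with more `E`'s than `N`'s has too few `N`'s before it
  by_contra! hlt
  obtain ⟨u, v, hsplit, hu⟩ := exists_eq_append_cons_of_lt_count
    (Nat.sub_one_lt_of_lt hlt : (w.take p).count false - 1 < (w.take p).count false)
  have hk := h ((w.take p).count false) (by omega) ((List.take_sublist p w).count_le false)
  have hw : w = u ++ false :: (v ++ w.drop p) := by
    conv_lhs => rw [← List.take_append_drop p w, hsplit]
    simp
  rw [show (w.take p).count false = u.count false + 1 by omega, hw, heightVal_eq_countBefore,
    countBefore_append_cons, Bool.not_false] at hk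
  have hu_true : u.count true ≤ (w.take p).count true := by
    rw [hsplit]
    simp
  omega

theorem count_take_false_le_of_stepVal_lt {w : List Bool} (hw : w.count false ≤ w.count true)
    (h : ∀ k, 1 ≤ k → k ≤ w.count true → stepVal w k < k) (p : ℕ) :
    (w.take p).count false ≤ (w.take p).count true := by
  -- if a prefix has `t` letters `N` and more than `t` letters `E`, the `(t+1)`-th `N` comes
  -- after the prefix and is preceded by more than `t` letters `E`
  by_contra! hlt
  have ht : (w.take p).count true < w.count true :=
    hlt.trans_le (((List.take_sublist p w).count_le false).trans hw)
  obtain ⟨u, v, rfl, hu⟩ := exists_eq_append_cons_of_lt_count ht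
  have hk := h (u.count true + 1) (by omega) (by omega)
  rw [stepVal_eq_countBefore, countBefore_append_cons, Bool.not_true] at hk
  have hp : p ≤ u.length := by
    by_contra! hp
    have : u.count true + 1 ≤ ((u ++ true :: v).take p).count true := by
      rw [List.take_append, List.take_of_length_le hp.le,
        show p - u.length = (p - u.length - 1) + 1 by omega, List.take_succ_cons]
      simp
    omega
  rw [List.take_append_of_le_length hp] at hlt hu
  have := (List.take_sublist p u).count_le false
  omega

theorem mul_succ_le_mul_heightVal {a b : ℕ} {P : List Bool}
    (habove : ∀ p, a * ((P.take p).count false) ≤ b * ((P.take p).count true)) {k : ℕ}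
    (hk : k < P.count false) : a * (k + 1) ≤ b * heightVal P (k + 1) := by
  obtain ⟨u, v, rfl, rfl⟩ := exists_eq_append_cons_of_lt_count hk
  rw [heightVal_eq_countBefore, countBefore_append_cons]
  have h := habove (u.length + 1)
  rw [List.take_append, List.take_of_length_le (by omega), Nat.add_sub_cancel_left] at h
  simpa using h

theorem mul_stepVal_le {a b : ℕ} {P : List Bool}
    (habove : ∀ p, a * ((P.take p).count false) ≤ b * ((P.take p).count true)) {k : ℕ}
    (hk : k < P.count true) : a * stepVal P (k + 1) ≤ b * k := by
  obtain ⟨u, v, rfl, rfl⟩ := exists_eq_append_cons_of_lt_count hk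
  rw [stepVal_eq_countBefore, countBefore_append_cons]
  simpa using habove u.length

theorem succ_le_heightVal_of_above {a b n c j : ℕ} {P : List Bool}
    (habove : ∀ p, a * ((P.take p).count false) ≤ b * ((P.take p).count true))
    (ha : 0 < a) (hE : P.count false = b * n) (hc : c < b) (hj : j < a * n) :
    j + 1 ≤ heightVal P ((c + j * b) / a + 1) := by
  have hk : (c + j * b) / a < P.count false := by
    rw [hE, Nat.div_lt_iff_lt_mul ha]
    nlinarith
  have h1 := mul_succ_le_mul_heightVal habove hk
  have h2 := Nat.lt_mul_div_succ (c + j * b) ha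
  have h3 : j * b < heightVal P ((c + j * b) / a + 1) * b := by nlinarith
  exact Nat.lt_of_mul_lt_mul_right h3

theorem stepVal_le_of_above {a b n c j : ℕ} {P : List Bool}
    (habove : ∀ p, a * ((P.take p).count false) ≤ b * ((P.take p).count true))
    (hb : 0 < b) (hN : P.count true = a * n) (hc : c < a) (hj : j < b * n) :
    stepVal P ((c + j * a) / b + 1) ≤ j := by
  have hk : (c + j * a) / b < P.count true := by
    rw [hN, Nat.div_lt_iff_lt_mul hb]
    nlinarith
  have h1 := mul_stepVal_le habove hk
  have h2 := Nat.mul_div_le (c + j * a) b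
  have h3 : stepVal P ((c + j * a) / b + 1) * a < (j + 1) * a := by nlinarith
  exact Nat.lt_succ_iff.mp (Nat.lt_of_mul_lt_mul_right h3)

theorem length_enlarge {a b n : ℕ} {P : List Bool} (hN : P.count true = a * n)
    (hE : P.count false = b * n) : (enlarge a b P).length = 2 * (a * b * n) := by
  rw [enlarge_eq_stretch, length_stretch, hN, hE]
  simp only [Bool.false_eq_true, if_false, if_true]
  ring

theorem letterPositions_subword_enlarge_false {a b n c : ℕ} {P : List Bool} (hc : c < b)
    (hN : P.count true = a * n) (hE : P.count false = b * n) :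
    letterPositions false (subword b (c + 1) (enlarge a b P)) =
      (List.range (a * n)).map fun j => j + heightVal P ((c + j * b) / a + 1) := by
  refine letterPositions_subword_of_eq_map hc (T := 2 * (a * n))
    (g := fun m => heightVal P (m / a + 1))
    (by rw [length_enlarge hN hE]; ring) ?_
  rw [enlarge_eq_stretch, letterPositions_stretch, hE]
  rw [show (if false = true then b else a) * (b * n) = b * (a * n) by simp; ring]
  rfl

theorem letterPositions_subword_enlarge_true {a b n c : ℕ} {P : List Bool} (hc : c < a)
    (hN : P.count true = a * n) (hE : P.count false = b * n) :
    letterPositions true (subword a (c + 1) (enlarge a b P)) =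
      (List.range (b * n)).map fun j => j + stepVal P ((c + j * a) / b + 1) := by
  refine letterPositions_subword_of_eq_map hc (T := 2 * (b * n))
    (g := fun m => stepVal P (m / b + 1))
    (by rw [length_enlarge hN hE]; ring) ?_
  rw [enlarge_eq_stretch, letterPositions_stretch, hN]
  rw [show (if true = true then b else a) * (a * n) = a * (b * n) by simp; ring]
  rfl

theorem enlarged_subwords_are_strip_decompositions_general (a b n : ℕ)
    (ha : 0 < a) (hb : 0 < b)
    (P : List Bool)
    (hN : P.count true = a * n)
    (hE : P.count false = b * n)
    (habove : ∀ p, a * ((P.take p).count false) ≤ b * ((P.take p).count true)) :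
    (∀ i, 1 ≤ i → i ≤ b →
      (subword b i (enlarge a b P)).count true = a * n ∧
      (subword b i (enlarge a b P)).count false = a * n ∧
      (∀ p, ((subword b i (enlarge a b P)).take p).count false ≤
            ((subword b i (enlarge a b P)).take p).count true) ∧
      (∀ j, 1 ≤ j → j ≤ a * n →
        heightVal (subword b i (enlarge a b P)) j
          = heightVal P ((i + (j - 1) * b + a - 1) / a))) ∧
    (∀ i, 1 ≤ i → i ≤ a →
      (subword a i (enlarge a b P)).count true = b * n ∧
      (subword a i (enlarge a b P)).count false = b * n ∧
      (∀ p, ((subword a i (enlarge a b P)).take p).count false ≤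
            ((subword a i (enlarge a b P)).take p).count true) ∧
      (∀ j, 1 ≤ j → j ≤ b * n →
        stepVal (subword a i (enlarge a b P)) j
          = stepVal P ((a * (j - 1) + i + b - 1) / b))) := by
  refine ⟨fun i hi hib => ?_, fun i hi hia => ?_⟩
  · obtain ⟨c, rfl⟩ : ∃ c, i = c + 1 := ⟨i - 1, by omega⟩
    have hpos := letterPositions_subword_enlarge_false (a := a) (c := c) (by omega) hN hE
    have hF := count_eq_of_letterPositions_eq_map hpos
    have hH : ∀ j < a * n, heightVal (subword b (c + 1) (enlarge a b P)) (j + 1) =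
        heightVal P ((c + j * b) / a + 1) := fun j hj =>
      countBefore_eq_of_letterPositions_eq_map hpos hj
    have hlen := length_subword (c := c) (by omega)
      (show (enlarge a b P).length = b * (2 * (a * n)) by rw [length_enlarge hN hE]; ring)
    refine ⟨?_, hF, count_take_false_le_of_le_heightVal fun k hk hk' => ?_, fun k hk hk' => ?_⟩
    · have := List.count_true_add_count_false (subword b (c + 1) (enlarge a b P))
      omega
    all_goals obtain ⟨j, rfl⟩ : ∃ j, k = j + 1 := ⟨k - 1, by omega⟩
    · rw [hH j (by omega)]
      exact succ_le_heightVal_of_above habove ha hE (by omega) (by omega)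
    · rw [hH j (by omega), Nat.add_sub_cancel,
        show c + 1 + j * b + a - 1 = c + j * b + a by omega, Nat.add_div_right _ ha]
  · obtain ⟨c, rfl⟩ : ∃ c, i = c + 1 := ⟨i - 1, by omega⟩
    have hpos := letterPositions_subword_enlarge_true (b := b) (c := c) (by omega) hN hE
    have hT := count_eq_of_letterPositions_eq_map hpos
    have hS : ∀ j < b * n, stepVal (subword a (c + 1) (enlarge a b P)) (j + 1) =
        stepVal P ((c + j * a) / b + 1) := fun j hj =>
      countBefore_eq_of_letterPositions_eq_map hpos hj
    have hlen := length_subword (c := c) (by omega)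
      (show (enlarge a b P).length = a * (2 * (b * n)) by rw [length_enlarge hN hE]; ring)
    have hF : (subword a (c + 1) (enlarge a b P)).count false = b * n := by
      have := List.count_true_add_count_false (subword a (c + 1) (enlarge a b P))
      omega
    refine ⟨hT, hF, count_take_false_le_of_stepVal_lt (by omega) fun k hk hk' => ?_,
      fun k hk hk' => ?_⟩
    all_goals obtain ⟨j, rfl⟩ : ∃ j, k = j + 1 := ⟨k - 1, by omega⟩
    · rw [hS j (by omega)]
      exact Nat.lt_succ_of_le (stepVal_le_of_above habove hb hN (by omega) (by omega))
    · rw [hS j (by omega), Nat.add_sub_cancel, Nat.mul_comm a j,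
        show j * a + (c + 1) + b - 1 = c + j * a + b by omega, Nat.add_div_right _ hb]

/-- for the word `P` of an (a,b)-Dyck path of size `n`
(`true` = N, `false` = E) and its (a,b)-enlargement `P̃`:
(a) for `1 ≤ i ≤ b`, `P̃^{(b)}_i` is a (1,1)-Dyck word of size `a*n` whose
height sequence is `𝔥_i(j) = h ⌈(i+(j-1)b)/a⌉` (the `i`-th height sequence of
the horizontal strip-decomposition `δ(P)`, `h` being the height sequence of `P`);
(b) for `1 ≤ i ≤ a`, `P̃^{(a)}_i` is a (1,1)-Dyck word of size `b*n` whose step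
sequence is `ū_i(j) = u ⌈(a(j-1)+i)/b⌉` (the `i`-th step sequence of the
vertical strip-decomposition `θ(P)`, `u` being the step sequence of `P`). -/
theorem enlarged_subwords_are_strip_decompositions (a b n : ℕ)
    (ha : 0 < a) (hb : 0 < b) (hn : 0 < n) (hab : Nat.Coprime a b)
    (P : List Bool)
    (hlen : P.length = (a + b) * n)
    (hN : P.count true = a * n)
    (hE : P.count false = b * n)
    (habove : ∀ p, a * ((P.take p).count false) ≤ b * ((P.take p).count true)) :
    (∀ i, 1 ≤ i → i ≤ b →
      (subword b i (enlarge a b P)).count true = a * n ∧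
      (subword b i (enlarge a b P)).count false = a * n ∧
      (∀ p, ((subword b i (enlarge a b P)).take p).count false ≤
            ((subword b i (enlarge a b P)).take p).count true) ∧
      (∀ j, 1 ≤ j → j ≤ a * n →
        heightVal (subword b i (enlarge a b P)) j
          = heightVal P ((i + (j - 1) * b + a - 1) / a))) ∧
    (∀ i, 1 ≤ i → i ≤ a →
      (subword a i (enlarge a b P)).count true = b * n ∧
      (subword a i (enlarge a b P)).count false = b * n ∧
      (∀ p, ((subword a i (enlarge a b P)).take p).count false ≤
            ((subword a i (enlarge a b P)).take p).count true) ∧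
      (∀ j, 1 ≤ j → j ≤ b * n →
        stepVal (subword a i (enlarge a b P)) j
          = stepVal P ((a * (j - 1) + i + b - 1) / b))) :=
  enlarged_subwords_are_strip_decompositions_general a b n ha hb P hN hE habove
end

section
/- Let b and n be positive integers. The number of (1,b)-Dyck paths of size n, i.e., the number of weakly increasing sequences (u_1, …, u_n) of nonnegative integers with u_k ≤ b(k−1) for all 1 ≤ k ≤ n, equals the Fuss–Catalan number (1/(bn+1))·C((b+1)n, n); equivalently, (bn+1) times this number equals the binomial coefficient C((b+1)n, n). -/
/-!
Encode `u` by the `n`-subset `{u k + k}` of `Fin L`, `L = (b + 1) n + 1`, and read a subset `A` as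
the cyclic word with a step `b` at each point of `A` and a step `-1` elsewhere. The bounds
`u k ≤ b k` say exactly that every proper prefix sum of this word is nonnegative. For an `n`-subset
the steps sum to `-1`, so by the cycle lemma exactly one of its `L` rotations has nonnegative
proper prefix sums. Hence `L` times the number of paths is `C(L, n)`, and
`C(L, n) (b n + 1) = C((b + 1) n, n) L`.
-/

open Finset
open scoped Pointwise Fin.NatCast

theorem existsUnique_lt_forall_le_add {H : ℕ → ℤ} {L : ℕ} (hL : 0 < L)
    (hH : ∀ m, H (m + L) = H m - 1) : ∃! r, r < L ∧ ∀ k < L, H r ≤ H (r + k) := by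
  classical
  have hmin : ∃ r, r < L ∧ ∀ i < L, H r ≤ H i := by
    obtain ⟨r, hr, hle⟩ := (range L).exists_min_image H ⟨0, mem_range.2 hL⟩
    exact ⟨r, mem_range.1 hr, fun i hi => hle i (mem_range.2 hi)⟩
  obtain ⟨hrL, hrle⟩ := Nat.find_spec hmin
  -- the first minimiser is a strict minimiser to its left, which survives the drop by one
  have hrlt : ∀ i < Nat.find hmin, H (Nat.find hmin) < H i := fun i hi => by
    by_contra! h
    exact Nat.find_min hmin hi ⟨hi.trans hrL, fun j hj => h.trans (hrle j hj)⟩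
  have hlt : ∀ r s, r < s → s < L → (∀ k < L, H r ≤ H (r + k)) →
      ¬ ∀ k < L, H s ≤ H (s + k) := fun r s hrs hsL hr hs => by
    have h₁ := hr (s - r) (by omega)
    have h₂ := hs (r + L - s) (by omega)
    rw [Nat.add_sub_cancel' hrs.le] at h₁
    rw [show s + (r + L - s) = r + L by omega, hH] at h₂
    omega
  refine existsUnique_of_exists_of_unique ⟨Nat.find hmin, hrL, fun k hk => ?_⟩ ?_
  · rcases lt_or_ge (Nat.find hmin + k) L with h | h
    · exact hrle _ h
    · obtain ⟨i, hi⟩ : ∃ i, Nat.find hmin + k = i + L := ⟨_, (Nat.sub_add_cancel h).symm⟩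
      have := hrlt i (by omega)
      rw [hi, hH]
      omega
  · rintro r s ⟨hrL, hr⟩ ⟨hsL, hs⟩
    by_contra hne
    rcases Ne.lt_or_gt hne with h | h
    · exact hlt r s h hsL hr hs
    · exact hlt s r h hrL hs hr

section Rotation

variable {L : ℕ} [NeZero L]

/-- The indices `i < k` are cast into `Fin L`, so for a rotated word `fun x => f (j + x)` the
prefixes wrap around modulo `L`. -/
def PrefixSumsNonneg (f : Fin L → ℤ) : Prop :=
  ∀ k < L, 0 ≤ ∑ i ∈ range k, f i

theorem prefixSumsNonneg_iff_sum_Iio (f : Fin L → ℤ) :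
    PrefixSumsNonneg f ↔ ∀ y : Fin L, 0 ≤ ∑ x ∈ Iio y, f x := by
  rw [PrefixSumsNonneg, Fin.forall_iff]
  refine forall₂_congr fun k hk => ?_
  rw [← Nat.Iio_eq_range, ← Fin.map_valEmbedding_Iio (a := ⟨k, hk⟩), sum_map]
  simp

theorem sum_range_val_add (f : Fin L → ℤ) (j : Fin L) (k : ℕ) :
    ∑ i ∈ range (j + k), f i = ∑ i ∈ range j, f i + ∑ i ∈ range k, f (j + i) := by
  simp [sum_range_add]

theorem sum_range_add_period (f : Fin L → ℤ) (m : ℕ) :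
    ∑ i ∈ range (m + L), f i = ∑ i ∈ range m, f i + ∑ x, f x := by
  rw [add_comm m, sum_range_add, ← Fin.sum_univ_eq_sum_range (fun i => f i), add_comm]
  simp

theorem existsUnique_prefixSumsNonneg_rotate (f : Fin L → ℤ) (hf : ∑ x, f x = -1) :
    ∃! j : Fin L, PrefixSumsNonneg fun i => f (j + i) := by
  set H : ℕ → ℤ := fun m => ∑ i ∈ range m, f i
  have hrot (j : Fin L) :
      PrefixSumsNonneg (fun i => f (j + i)) ↔ ∀ k < L, H j ≤ H (j + k) := by
    refine forall₂_congr fun k _ => ?_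
    simp only [H, sum_range_val_add]
    constructor <;> intro h <;> linarith
  obtain ⟨r, ⟨hrL, hr⟩, huniq⟩ := existsUnique_lt_forall_le_add (NeZero.pos L)
    (H := H) fun m => by simp only [H, sum_range_add_period, hf]; ring
  exact ⟨⟨r, hrL⟩, (hrot _).2 hr, fun j hj => Fin.ext (huniq j ⟨j.isLt, (hrot j).1 hj⟩)⟩

end Rotation

section DyckSteps

variable {L : ℕ} (b : ℕ)

def dyckStep (A : Finset (Fin L)) (x : Fin L) : ℤ := if x ∈ A then b else -1

theorem sum_dyckStep (A s : Finset (Fin L)) :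
    ∑ x ∈ s, dyckStep b A x = (b + 1) * #{x ∈ s | x ∈ A} - #s := by
  rw [← card_filter_add_card_filter_not (s := s) (· ∈ A)]
  simp only [dyckStep, sum_ite, sum_const, nsmul_eq_mul]
  push_cast
  ring

variable [NeZero L]

theorem dyckStep_neg_vadd (A : Finset (Fin L)) (j : Fin L) :
    dyckStep b (-j +ᵥ A) = fun x => dyckStep b A (j + x) := by
  ext x
  simp only [dyckStep, mem_neg_vadd_finset_iff, vadd_eq_add]

theorem existsUnique_prefixSumsNonneg_dyckStep_neg_vadd {n : ℕ} (hL : L = (b + 1) * n + 1)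
    {A : Finset (Fin L)} (hA : #A = n) :
    ∃! j : Fin L, PrefixSumsNonneg (dyckStep b (-j +ᵥ A)) := by
  simp only [dyckStep_neg_vadd]
  apply existsUnique_prefixSumsNonneg_rotate
  rw [sum_dyckStep, filter_mem_eq_inter, univ_inter, hA, card_univ, Fintype.card_fin, hL]
  push_cast
  ring

theorem card_prefixSumsNonneg_dyckStep_mul {n : ℕ} (hL : L = (b + 1) * n + 1) :
    Nat.card {A : Finset (Fin L) // #A = n ∧ PrefixSumsNonneg (dyckStep b A)} * L =
      L.choose n := by
  let rotate : {A : Finset (Fin L) // #A = n ∧ PrefixSumsNonneg (dyckStep b A)} × Fin L →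
      {B : Finset (Fin L) // #B = n} :=
    fun Aj => ⟨Aj.2 +ᵥ Aj.1.1, by rw [card_vadd_finset, Aj.1.2.1]⟩
  have hrotate : Function.Bijective rotate := by
    constructor
    · rintro ⟨⟨A, hA, hdomA⟩, j⟩ ⟨⟨A', _, hdomA'⟩, j'⟩ h
      replace h : j +ᵥ A = j' +ᵥ A' := congrArg Subtype.val h
      obtain ⟨_, _, huniq⟩ := existsUnique_prefixSumsNonneg_dyckStep_neg_vadd b hL
        (A := j +ᵥ A) (by rw [card_vadd_finset, hA])
      obtain rfl : j = j' := (huniq j (by simpa only [neg_vadd_vadd] using hdomA)).trans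
        (huniq j' (by simpa only [h, neg_vadd_vadd] using hdomA')).symm
      obtain rfl : A = A' := (vadd_left_cancel_iff j).1 h
      rfl
    · rintro ⟨B, hB⟩
      obtain ⟨j, hj, -⟩ := existsUnique_prefixSumsNonneg_dyckStep_neg_vadd b hL hB
      exact ⟨⟨⟨-j +ᵥ B, by rw [card_vadd_finset, hB], hj⟩, j⟩, Subtype.ext (vadd_neg_vadd j B)⟩
  have h := Nat.card_congr (Equiv.ofBijective rotate hrotate)
  rwa [Nat.card_prod, Nat.card_fin, Nat.card_eq_fintype_card (α := {B // #B = n}),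
    Fintype.card_finset_len, Fintype.card_fin] at h

end DyckSteps

section OrderEmbedding

variable {n L : ℕ}

theorem Fin.val_apply_add_sub_le (f : Fin n ↪o Fin L) {i j : Fin n} (hij : i ≤ j) :
    (f i : ℕ) + (j - i) ≤ f j := by
  have h := card_le_card_of_injOn f (s := Icc i j) (t := Icc (f i) (f j))
    (fun x hx => by
      rw [coe_Icc, Set.mem_Icc] at hx
      simpa using And.intro (f.monotone hx.1) (f.monotone hx.2))
    f.injective.injOn
  rw [Fin.card_Icc, Fin.card_Icc] at h
  omega

theorem Fin.val_le_val_apply (f : Fin n ↪o Fin L) (k : Fin n) : (k : ℕ) ≤ f k := by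
  have h := card_le_card_of_injOn f (s := Iio k) (t := Iio (f k))
    (fun x hx => by simpa using hx) f.injective.injOn
  rwa [Fin.card_Iio, Fin.card_Iio] at h

theorem card_filter_apply_lt_apply {α : Type*} [LinearOrder α] (f : Fin n ↪o α) (k : Fin n) :
    #{i | f i < f k} = k := by
  rw [← Fin.card_Iio k]
  congr 1
  ext i
  simp

theorem card_filter_Iio_mem_map {α : Type*} [LinearOrder α] [LocallyFiniteOrderBot α]
    (f : Fin n ↪o α) (y : α) : #{x ∈ Iio y | x ∈ univ.map f.toEmbedding} = #{i | f i < y} := by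
  have h : {x ∈ Iio y | x ∈ univ.map f.toEmbedding} = {x ∈ univ.map f.toEmbedding | x < y} := by
    ext x
    simp only [mem_filter, mem_Iio, and_comm]
  rw [h, filter_map, card_map]
  rfl

def monotoneEquivOrderEmbedding (g : Fin n → ℕ) (hg : ∀ k, g k + k < L) :
    {u : Fin n → ℕ // Monotone u ∧ ∀ k, u k ≤ g k} ≃
      {f : Fin n ↪o Fin L // ∀ k, (f k : ℕ) ≤ g k + k} where
  toFun u :=
    ⟨OrderEmbedding.ofStrictMono
        (fun k => ⟨u.1 k + k, (Nat.add_le_add_right (u.2.2 k) _).trans_lt (hg k)⟩)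
        fun k k' hkk' => by
          have := u.2.1 hkk'.le
          simp only [Fin.mk_lt_mk]
          omega,
      fun k => Nat.add_le_add_right (u.2.2 k) _⟩
  invFun f :=
    ⟨fun k => f.1 k - k, fun k k' hkk' => by
        have := Fin.val_apply_add_sub_le f.1 hkk'
        simp only
        omega,
      fun k => Nat.sub_le_of_le_add (f.2 k)⟩
  left_inv u := Subtype.ext <| funext fun k => Nat.add_sub_cancel (u.1 k) k
  right_inv f := Subtype.ext <| RelEmbedding.ext fun k =>
    Fin.ext <| Nat.sub_add_cancel (Fin.val_le_val_apply f.1 k)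

def orderEmbeddingEquivFinset {α : Type*} [LinearOrder α] (n : ℕ) (P : Finset α → Prop) :
    {f : Fin n ↪o α // P (univ.map f.toEmbedding)} ≃ {A : Finset α // #A = n ∧ P A} where
  toFun f := ⟨univ.map f.1.toEmbedding, by simp, f.2⟩
  invFun A := ⟨A.1.orderEmbOfFin A.2.1, by rw [map_orderEmbOfFin_univ]; exact A.2.2⟩
  left_inv f := Subtype.ext (orderEmbOfFin_unique' _ fun x => by simp).symm
  right_inv A := Subtype.ext (map_orderEmbOfFin_univ _ _)

end OrderEmbedding

theorem prefixSumsNonneg_dyckStep_map_iff {L : ℕ} [NeZero L] (b : ℕ) {n : ℕ}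
    (hL : L = (b + 1) * n + 1) (f : Fin n ↪o Fin L) :
    PrefixSumsNonneg (dyckStep b (univ.map f.toEmbedding)) ↔ ∀ k, (f k : ℕ) ≤ b * k + k := by
  simp only [prefixSumsNonneg_iff_sum_Iio, sum_dyckStep, card_filter_Iio_mem_map, Fin.card_Iio,
    sub_nonneg]
  norm_cast
  constructor
  · intro h k
    have := h (f k)
    rw [card_filter_apply_lt_apply] at this
    linarith
  · intro h y
    by_contra! hy
    set c := #{i | f i < y}
    -- if `c = n` then `y ≤ (b + 1) n` already; otherwise the `c`-th point lies below `y`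
    have hcn : c < n := by
      have hc : c ≤ n := (card_le_univ _).trans_eq (Fintype.card_fin n)
      have := y.isLt
      rcases hc.lt_or_eq with hc | hc
      · exact hc
      · subst hL; rw [hc] at hy; omega
    have hfy : f ⟨c, hcn⟩ < y := by
      rw [Fin.lt_def]
      linarith [add_one_mul b c, h ⟨c, hcn⟩]
    have hsub : Iic (⟨c, hcn⟩ : Fin n) ⊆ ({i | f i < y} : Finset (Fin n)) := fun i hi => by
      simp only [mem_Iic, mem_filter_univ] at hi ⊢
      exact (f.monotone hi).trans_lt hfy
    have : c + 1 ≤ c := by simpa only [Fin.card_Iic] using card_le_card hsub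
    omega

theorem count_b_dyck_paths_general (b n : ℕ) :
    (b * n + 1) *
      Set.ncard {u : Fin n → ℕ | Monotone u ∧ ∀ k : Fin n, u k ≤ b * (k : ℕ)}
      = Nat.choose ((b + 1) * n) n := by
  have hbound (k : Fin n) : b * k + k < (b + 1) * n + 1 := by
    have := Nat.mul_le_mul_left b k.isLt.le
    linarith [add_one_mul b n, k.isLt]
  have hpaths : Set.ncard {u : Fin n → ℕ | Monotone u ∧ ∀ k : Fin n, u k ≤ b * (k : ℕ)} =
      Nat.card {A : Finset (Fin ((b + 1) * n + 1)) //
        #A = n ∧ PrefixSumsNonneg (dyckStep b A)} := by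
    rw [← Nat.card_coe_set_eq]
    exact Nat.card_congr <| (monotoneEquivOrderEmbedding _ hbound).trans <|
      (Equiv.subtypeEquivRight fun f => (prefixSumsNonneg_dyckStep_map_iff b rfl f).symm).trans
        (orderEmbeddingEquivFinset n fun A => PrefixSumsNonneg (dyckStep b A))
  have hsub : (b + 1) * n + 1 - n = b * n + 1 := by
    rw [add_one_mul]
    omega
  apply Nat.eq_of_mul_eq_mul_right ((b + 1) * n).add_one_pos
  rw [hpaths, Nat.choose_mul_succ_eq, ← card_prefixSumsNonneg_dyckStep_mul b rfl, hsub]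
  ring

/-- the number of (1,b)-Dyck paths of size `n`, i.e. of weakly
increasing sequences `(u 0, …, u (n-1))` of nonnegative integers with
`u k ≤ b * k` (0-indexed; this is `u_{k+1} ≤ b·((k+1)-1)`), equals the
Fuss–Catalan number `(1/(bn+1))·C((b+1)n, n)`; equivalently, `(b*n + 1)` times
this number equals the binomial coefficient `C((b+1)n, n)`. -/
theorem count_b_dyck_paths (b n : ℕ) (hb : 0 < b) (hn : 0 < n) :
    (b * n + 1) *
      Set.ncard {u : Fin n → ℕ | Monotone u ∧ ∀ k : Fin n, u k ≤ b * (k : ℕ)}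
      = Nat.choose ((b + 1) * n) n :=
  count_b_dyck_paths_general b n
end
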